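/- If f_W is irreducible over k', then F is reducible for W. -/

import Mathlib

open MvPolynomial

noncomputable section

def Vspace {σ K : Type*} [Field K] (G : Set (MvPolynomial σ K)) (i : ℕ) :
    Submodule K (MvPolynomial σ K) :=
  sInf {W : Submodule K (MvPolynomial σ K) |
    (∀ f ∈ W, MvPolynomial.totalDegree f ≤ i) ∧
    (∀ g ∈ G, MvPolynomial.totalDegree g ≤ i → g ∈ W) ∧
    ∀ g ∈ W, ∀ h : MvPolynomial σ K,
      MvPolynomial.totalDegree (h * g) ≤ i → h * g ∈ W}

def lastFallDegree {σ K : Type*} [Field K] (G : Set (MvPolynomial σ K)) : ℕ :=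
  sSup {d : ℕ | 0 < d ∧
    Vspace G d ⊓ MvPolynomial.restrictTotalDegree σ K (d - 1) ≠ Vspace G (d - 1)}

/-- `ℓ(h(x_i))` : the linear form `∑_j h_j x_{ij}` in `S = k[x_{ij}]`,
for a univariate polynomial `h` of degree `< n'`. -/
def ellAt {k : Type*} [Field k] (m n' : ℕ) (i : Fin m) (h : Polynomial k) :
    MvPolynomial (Fin m × Fin n') k :=
  ∑ j : Fin n', C (h.coeff (j : ℕ)) * X (i, j)

/-- `ℓ(f)` for `f = ∑_i f_i(x_i)` with `deg f_i < n'`. -/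
def ellSum {k : Type*} [Field k] (m n' : ℕ) (φ : Fin m → Polynomial k) :
    MvPolynomial (Fin m × Fin n') k :=
  ∑ i : Fin m, ellAt m n' i (φ i)

/-- `Q̄_r` : the set of relations `x_{ij}^q - x_{i,j+1}` (for `j < n'-1`) and
`x_{i,n'-1}^q - ℓ(g_W(x_i))`, restricted to indices `i ≥ r`. -/
def QbarFrom {k : Type*} [Field k] (m n' q r : ℕ) (gW : Polynomial k) :
    Set (MvPolynomial (Fin m × Fin n') k) :=
  {P | ∃ (i : Fin m) (j : Fin n') (hj : (j : ℕ) + 1 < n'), r ≤ (i : ℕ) ∧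
        P = X (i, j) ^ q - X (i, ⟨(j : ℕ) + 1, hj⟩)} ∪
  {P | ∃ (i : Fin m) (j : Fin n'), r ≤ (i : ℕ) ∧ (j : ℕ) + 1 = n' ∧
        P = X (i, j) ^ q - ellAt m n' i gW}

/-- `S_{1r}` : the space of `k`-linear forms in the variables `x_{ij}` with `i ≥ r`. -/
def S1r {k : Type*} [Field k] (m n' : ℕ) (r : ℕ) :
    Submodule k (MvPolynomial (Fin m × Fin n') k) :=
  Submodule.span k {P | ∃ p : Fin m × Fin n', r ≤ (p.1 : ℕ) ∧ P = X p}

/-- `L(h)` for `h = ∑_i h_i(x_i)` with `deg h_i < n` : the `k'`-linearized polynomial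
`∑_i ∑_j h_{ij} x_i^{q^j}`. -/
def Lmap {k : Type*} [Field k] (m n q : ℕ) (h : Fin m → Polynomial k) :
    MvPolynomial (Fin m) k :=
  ∑ i : Fin m, ∑ j : Fin n, C ((h i).coeff (j : ℕ)) * X i ^ q ^ (j : ℕ)

/-- `F` is reducible for `W` (where `W` corresponds to `f_W`): for each `i < m-1`,
either `V_{Ḡ,q} ∩ S_{1i} = V_{Ḡ,q} ∩ S_{1,i+1}`, or some `k'`-linearized `L(f_i)`,
`f_i = ∑_{j≥i} g_{ij}` with `deg g_{ij} < n'`, has `ℓ(f_i) ∈ V_{Ḡ,q} ∩ S_{1i}` and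
`gcd(g_{ii}, f_W) = 1`. -/
def ReducibleFor {k' k : Type*} [Field k'] [Field k] [Algebra k' k]
    (q m n' : ℕ) (fW : Polynomial k')
    (Gbar : Set (MvPolynomial (Fin m × Fin n') k)) : Prop :=
  ∀ i : Fin m, (i : ℕ) + 1 < m →
    (Vspace Gbar q ⊓ S1r m n' (i : ℕ) = Vspace Gbar q ⊓ S1r m n' ((i : ℕ) + 1)) ∨
    ∃ φ : Fin m → Polynomial k,
      (∀ j, (φ j).natDegree < n') ∧
      (∀ j : Fin m, (j : ℕ) < (i : ℕ) → φ j = 0) ∧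
      ellSum m n' φ ∈ Vspace Gbar q ⊓ S1r m n' (i : ℕ) ∧
      IsCoprime (φ i) (fW.map (algebraMap k' k))

open scoped Polynomial

/-!
Write an element of `V_{Ḡ,q} ∩ S_{1i}` as `ℓ(∑_{j ≥ i} g_j(x_j))` with `deg g_j < n'`. Its
`q`-th power lies in `V_{Ḡ,q}`, and reducing it by `Q̄` gives `ℓ(∑_j (X · σ(g_j) mod f_W)(x_j))`,
where `σ` is the `q`-power Frobenius of `k` acting on coefficients. So the classes of the
components `g_i` form a `k`-subspace `N` of `k[X]/(f_W)` that is stable under the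
`σ`-semilinear map `Φ x = X · σ(x)`; moreover `Φⁿ = 1` because `σⁿ = 1` and `f_W ∣ Xⁿ - 1`.

If `V_{Ḡ,q} ∩ S_{1i} ≠ V_{Ḡ,q} ∩ S_{1,i+1}` then `N ≠ 0`, and for a suitable `c ∈ k` the
trace `∑_{t<n} Φᵗ(c x)` of a nonzero `x ∈ N` is a nonzero `Φ`-fixed element `g` of `N` (the
additive polynomial `∑_t a_t Y^{qᵗ}` has degree `< |k|`, so it cannot vanish on all of `k`).
For `d = gcd(g, f_W)`, the relation `g ≡ X σ(g)` gives `σ(d) ∣ d`, so the monic `d` has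
coefficients in `k'` and divides the irreducible `f_W`; since `f_W ∤ g`, `d = 1`.
-/

theorem FiniteField.mem_range_algebraMap_of_pow_card_eq {K L : Type*} [Field K] [Fintype K]
    [Field L] [Finite L] [Algebra K L] {x : L} (hx : x ^ Fintype.card K = x) :
    x ∈ Set.range (algebraMap K L) := by
  rw [IsGalois.mem_range_algebraMap_iff_fixed]
  intro f
  obtain ⟨j, rfl⟩ := (FiniteField.bijective_frobeniusAlgEquivOfAlgebraic_pow K L).2 f
  rw [AlgEquiv.coe_pow, FiniteField.coe_frobeniusAlgEquivOfAlgebraic]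
  exact Function.iterate_fixed hx j

section SemilinearFixedPoint
variable {K : Type*} [Field K] [Fintype K] {q n : ℕ}

theorem exists_sum_pow_pow_mul_ne_zero (hq : 1 < q) (hK : Fintype.card K = q ^ n) {a : ℕ → K}
    (ha : a 0 ≠ 0) : ∃ c : K, ∑ t ∈ Finset.range n, c ^ q ^ t * a t ≠ 0 := by
  have hn : n ≠ 0 := by
    rintro rfl
    exact (Fintype.one_lt_card (α := K)).ne' (by simpa using hK)
  by_contra! h
  set P : K[X] := ∑ t ∈ Finset.range n, Polynomial.C (a t) * Polynomial.X ^ q ^ t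
  have hdeg : P.natDegree < (Finset.univ : Finset K).card := by
    refine (Polynomial.natDegree_sum_le_of_forall_le _ _ (n := q ^ (n - 1))
      fun t ht => ?_).trans_lt ?_
    · refine (Polynomial.natDegree_C_mul_X_pow_le _ _).trans (Nat.pow_le_pow_right (by omega) ?_)
      rw [Finset.mem_range] at ht
      omega
    · rw [Finset.card_univ, hK]
      exact Nat.pow_lt_pow_right hq (by omega)
  have hP : P = 0 := P.eq_zero_of_natDegree_lt_card_of_eval_eq_zero' _ (fun c _ => by
    simp only [P, Polynomial.eval_finsetSum, Polynomial.eval_mul, Polynomial.eval_C,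
      Polynomial.eval_pow, Polynomial.eval_X]
    simpa only [mul_comm] using h c) hdeg
  have hcoeff : P.coeff 1 = a 0 := by
    simp only [P, Polynomial.finsetSum_coeff, Polynomial.coeff_C_mul_X_pow]
    rw [Finset.sum_eq_single 0 (fun t _ ht => if_neg (by simp [eq_comm, ht]; omega))
      (by simp [hn])]
    simp
  exact ha (by rw [← hcoeff, hP, Polynomial.coeff_zero])

theorem exists_sum_pow_pow_smul_ne_zero {M : Type*} [AddCommGroup M] [Module K M]
    (hq : 1 < q) (hK : Fintype.card K = q ^ n) {x : ℕ → M} (hx : x 0 ≠ 0) :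
    ∃ c : K, ∑ t ∈ Finset.range n, c ^ q ^ t • x t ≠ 0 := by
  obtain ⟨f, hf⟩ : ∃ f : Module.Dual K M, f (x 0) ≠ 0 := by
    by_contra! h
    exact hx ((Module.forall_dual_apply_eq_zero_iff K _).1 h)
  obtain ⟨c, hc⟩ := exists_sum_pow_pow_mul_ne_zero hq hK (a := fun t => f (x t)) hf
  exact ⟨c, fun h => hc (by simpa using congrArg f h)⟩

theorem exists_ne_zero_fixed_of_semilinear {M : Type*} [AddCommGroup M] [Module K M]
    (hq : 1 < q) (hK : Fintype.card K = q ^ n) (Φ : M →+ M)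
    (hΦ : ∀ (c : K) (x : M), Φ (c • x) = c ^ q • Φ x) (hΦn : ∀ x, Φ^[n] x = x)
    {N : Submodule K M} (hN : Set.MapsTo Φ N N) {x : M} (hxN : x ∈ N) (hx : x ≠ 0) :
    ∃ y ∈ N, y ≠ 0 ∧ Φ y = y := by
  have iterate_smul : ∀ t (c : K) (z : M), Φ^[t] (c • z) = c ^ q ^ t • Φ^[t] z := by
    intro t
    induction t with
    | zero => simp
    | succ t ih =>
      intro c z
      rw [Function.iterate_succ_apply', ih, hΦ, ← pow_mul, ← pow_succ,
        Function.iterate_succ_apply']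
  obtain ⟨c, hc⟩ := exists_sum_pow_pow_smul_ne_zero hq hK (x := fun t => Φ^[t] x) hx
  refine ⟨∑ t ∈ Finset.range n, Φ^[t] (c • x),
    N.sum_mem fun t _ => hN.iterate t (N.smul_mem c hxN), by simpa [iterate_smul] using hc, ?_⟩
  have shift := (Finset.sum_range_succ' (fun t => Φ^[t] (c • x)) n).symm.trans
    (Finset.sum_range_succ _ n)
  rw [hΦn, Function.iterate_zero_apply, add_left_inj] at shift
  simpa [map_sum, ← Function.iterate_succ_apply' Φ] using shift

end SemilinearFixedPoint

section TwistedFrobenius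
variable {K : Type*} [CommRing K] (F : K[X]) (σ : K →+* K) (hF : F ∣ F.map σ)

noncomputable def twistedFrobenius : AdjoinRoot F →+ AdjoinRoot F :=
  (AddMonoidHom.mulLeft (AdjoinRoot.root F)).comp (AdjoinRoot.map σ F F hF).toAddMonoidHom

variable {F σ hF}

theorem twistedFrobenius_apply (x : AdjoinRoot F) :
    twistedFrobenius F σ hF x = AdjoinRoot.root F * AdjoinRoot.map σ F F hF x := rfl

theorem twistedFrobenius_mk (g : K[X]) :
    twistedFrobenius F σ hF (AdjoinRoot.mk F g) = AdjoinRoot.mk F (Polynomial.X * g.map σ) := by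
  rw [twistedFrobenius_apply, AdjoinRoot.map, AdjoinRoot.lift_mk, map_mul, AdjoinRoot.mk_X,
    ← AdjoinRoot.aeval_eq, Polynomial.aeval_def, Polynomial.eval₂_map, AdjoinRoot.algebraMap_eq]

theorem twistedFrobenius_smul (c : K) (x : AdjoinRoot F) :
    twistedFrobenius F σ hF (c • x) = σ c • twistedFrobenius F σ hF x := by
  simp only [twistedFrobenius_apply, Algebra.smul_def, AdjoinRoot.algebraMap_eq, map_mul,
    AdjoinRoot.map_of]
  ring

theorem twistedFrobenius_iterate (t : ℕ) (x : AdjoinRoot F) :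
    (twistedFrobenius F σ hF)^[t] x =
      AdjoinRoot.root F ^ t * (AdjoinRoot.map σ F F hF ^ t) x := by
  induction t generalizing x with
  | zero => simp
  | succ t ih =>
    rw [Function.iterate_succ_apply', ih, twistedFrobenius_apply, map_mul, map_pow,
      AdjoinRoot.map_root, pow_succ' (AdjoinRoot.map σ F F hF), RingHom.mul_def,
      RingHom.comp_apply]
    ring

theorem twistedFrobenius_iterate_eq_self {n : ℕ} (hσ : ∀ c, σ^[n] c = c)
    (hFn : F ∣ Polynomial.X ^ n - 1) (x : AdjoinRoot F) :
    (twistedFrobenius F σ hF)^[n] x = x := by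
  set τ := AdjoinRoot.map σ F F hF
  have hτ : τ ^ n = RingHom.id _ := by
    refine AdjoinRoot.ringHom_ext (RingHom.ext fun c => ?_) ?_
    · have := Function.Semiconj.iterate_right (f := AdjoinRoot.of F) (ga := σ) (gb := τ)
        (fun c => (AdjoinRoot.map_of σ F F hF c).symm) n c
      simp [RingHom.coe_pow, ← this, hσ]
    · simp [RingHom.coe_pow, Function.iterate_fixed (AdjoinRoot.map_root σ F F hF), τ]
  have hroot : AdjoinRoot.root F ^ n = 1 := by
    rw [← AdjoinRoot.mk_X, ← map_pow, ← map_one (AdjoinRoot.mk F), AdjoinRoot.mk_eq_mk]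
    exact hFn
  rw [twistedFrobenius_iterate, hτ, hroot, one_mul, RingHom.id_apply]

end TwistedFrobenius

theorem isCoprime_of_dvd_X_mul_map_sub {K L : Type*} [Field K] [Fintype K] [Field L] [Finite L]
    [Algebra K L] {σ : L →+* L} (hσ : ∀ a, σ a = a ^ Fintype.card K) {f : K[X]}
    (hf : Irreducible f) {g : L[X]} (hg : ¬ f.map (algebraMap K L) ∣ g)
    (hfix : f.map (algebraMap K L) ∣ Polynomial.X * g.map σ - g) :
    IsCoprime g (f.map (algebraMap K L)) := by
  classical
  set F := f.map (algebraMap K L)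
  have hσF : F.map σ = F := by
    rw [Polynomial.map_map]
    congr 1
    ext b
    simp [hσ, ← map_pow, FiniteField.pow_card]
  set d := gcd g F with hd_def
  have hd : d.Monic := by
    rw [hd_def, ← normalize_gcd]
    exact Polynomial.monic_normalize (gcd_ne_zero_of_right (Polynomial.map_ne_zero hf.ne_zero))
  have hdF : d.map σ ∣ F := hσF ▸ Polynomial.map_dvd σ (gcd_dvd_right g F)
  -- `g = X * g.map σ - (X * g.map σ - g)`, and `d.map σ` divides both terms
  have hdσ : d.map σ ∣ d := by
    refine dvd_gcd ?_ hdF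
    have h1 : d.map σ ∣ Polynomial.X * g.map σ :=
      dvd_mul_of_dvd_right (Polynomial.map_dvd σ (gcd_dvd_left g F)) _
    simpa using dvd_sub h1 (hdF.trans hfix)
  have hdfix : d = d.map σ := Polynomial.eq_of_monic_of_dvd_of_natDegree_le (hd.map σ) hd hdσ
    (Polynomial.natDegree_map σ).ge
  have hlift : d ∈ Polynomial.lifts (algebraMap K L) :=
    (Polynomial.lifts_iff_coeff_lifts d).2 fun j => FiniteField.mem_range_algebraMap_of_pow_card_eq
      (by rw [← hσ, ← Polynomial.coeff_map, ← hdfix])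
  obtain ⟨d₀, hd₀d, -, hd₀⟩ := Polynomial.lifts_and_natDegree_eq_and_monic hlift hd
  obtain ⟨e, rfl⟩ : d₀ ∣ f :=
    (Polynomial.map_dvd_map _ (algebraMap K L).injective hd₀).1 (hd₀d ▸ gcd_dvd_right g F)
  rcases hf.isUnit_or_isUnit rfl with hu | hu
  · rw [← gcd_isUnit_iff, ← hd_def, ← hd₀d]
    exact hu.map (Polynomial.mapRingHom (algebraMap K L))
  · exact absurd ((Polynomial.map_dvd _ (associated_mul_unit_right d₀ e hu).symm.dvd).trans
      (hd₀d ▸ gcd_dvd_left g F)) hg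

section DegreeXPowSub
variable {R : Type*} [Ring R] [Nontrivial R]

theorem Polynomial.Monic.degree_X_pow_natDegree_sub_lt {f : R[X]} (hf : f.Monic) :
    (Polynomial.X ^ f.natDegree - f).degree < (f.natDegree : WithBot ℕ) := by
  have h := Polynomial.degree_sub_lt_left (p := Polynomial.X ^ f.natDegree) (q := f)
    (by rw [Polynomial.degree_X_pow, Polynomial.degree_eq_natDegree hf.ne_zero])
    (Polynomial.monic_X_pow _).ne_zero (by rw [Polynomial.leadingCoeff_X_pow, hf.leadingCoeff])
  rwa [Polynomial.degree_X_pow] at h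

theorem Polynomial.degree_X_pow_sub_of_degree_lt {n : ℕ} {g : R[X]} (hg : g.degree < n) :
    (Polynomial.X ^ n - g).degree = (n : WithBot ℕ) := by
  rw [Polynomial.degree_sub_eq_left_of_degree_lt (by rwa [Polynomial.degree_X_pow]),
    Polynomial.degree_X_pow]

end DegreeXPowSub

section Vspace
variable {σ K : Type*} [Field K] {G : Set (MvPolynomial σ K)} {q : ℕ}

theorem mem_Vspace_of_mem {g : MvPolynomial σ K} (hg : g ∈ G) (hdeg : g.totalDegree ≤ q) :
    g ∈ Vspace G q :=
  Submodule.mem_sInf.2 fun _ hW => hW.2.1 g hg hdeg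

theorem mul_mem_Vspace {g h : MvPolynomial σ K} (hg : g ∈ Vspace G q)
    (hdeg : (h * g).totalDegree ≤ q) : h * g ∈ Vspace G q :=
  Submodule.mem_sInf.2 fun W hW => hW.2.2 g (Submodule.mem_sInf.1 hg W hW) h hdeg

theorem pow_mem_Vspace (hq : 1 ≤ q) {g : MvPolynomial σ K} (hg : g ∈ Vspace G q)
    (hdeg : g.totalDegree ≤ 1) : g ^ q ∈ Vspace G q := by
  obtain ⟨r, rfl⟩ := Nat.exists_eq_add_of_le' hq
  refine pow_succ g r ▸ mul_mem_Vspace hg ((totalDegree_mul _ _).trans ?_)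
  have := (totalDegree_pow g r).trans (Nat.mul_le_mul_left r hdeg)
  omega

end Vspace

section LinearForms
variable {k : Type*} [Field k] {m n' : ℕ}

def ellAtₗ (m n' : ℕ) (i : Fin m) : k[X] →ₗ[k] MvPolynomial (Fin m × Fin n') k where
  toFun := ellAt m n' i
  map_add' _ _ := by simp [ellAt, add_mul, Finset.sum_add_distrib]
  map_smul' _ _ := by simp [ellAt, Finset.smul_sum, MvPolynomial.smul_eq_C_mul, mul_assoc]

theorem ellAtₗ_apply (i : Fin m) (h : k[X]) : ellAtₗ m n' i h = ellAt m n' i h := rfl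

def ellSumₗ (m n' : ℕ) : (Fin m → k[X]) →ₗ[k] MvPolynomial (Fin m × Fin n') k :=
  ∑ i, (ellAtₗ m n' i).comp (LinearMap.proj i)

theorem ellSumₗ_apply (φ : Fin m → k[X]) : ellSumₗ m n' φ = ellSum m n' φ := by
  simp [ellSumₗ, ellSum, ellAtₗ_apply]

theorem ellAt_X_pow (i : Fin m) {j : ℕ} (hj : j < n') :
    ellAt m n' i (Polynomial.X ^ j : k[X]) = X (i, ⟨j, hj⟩) := by
  rw [ellAt, Finset.sum_eq_single ⟨j, hj⟩
    (fun b _ hb => by simp [Polynomial.coeff_X_pow, Fin.val_ne_of_ne hb])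
    (by simp)]
  simp

theorem totalDegree_ellAt_le (i : Fin m) (h : k[X]) : (ellAt m n' i h).totalDegree ≤ 1 :=
  (totalDegree_finsetSum _ _).trans <| Finset.sup_le fun j _ =>
    (totalDegree_mul _ _).trans (by simp [totalDegree_X])

theorem totalDegree_ellSum_le (φ : Fin m → k[X]) : (ellSum m n' φ).totalDegree ≤ 1 :=
  (totalDegree_finsetSum _ _).trans <| Finset.sup_le fun i _ => totalDegree_ellAt_le i _

theorem ellAt_mem_S1r {r : ℕ} {i : Fin m} (hi : r ≤ i) (h : k[X]) :
    ellAt m n' i h ∈ S1r m n' r :=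
  Submodule.sum_mem _ fun j _ => smul_eq_C_mul (R := k) _ _ ▸
    Submodule.smul_mem _ _ (Submodule.subset_span ⟨(i, j), hi, rfl⟩)

variable (k) in
def polyTuplesFrom (m n' r : ℕ) : Submodule k (Fin m → k[X]) where
  carrier := {φ | (∀ j, φ j ∈ Polynomial.degreeLT k n') ∧ ∀ j : Fin m, (j : ℕ) < r → φ j = 0}
  add_mem' ha hb :=
    ⟨fun j => add_mem (ha.1 j) (hb.1 j), fun j hj => by simp [ha.2 j hj, hb.2 j hj]⟩
  zero_mem' := ⟨fun _ => zero_mem _, fun _ _ => rfl⟩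
  smul_mem' c _ ha :=
    ⟨fun j => Submodule.smul_mem _ c (ha.1 j), fun j hj => by simp [ha.2 j hj]⟩

theorem mem_polyTuplesFrom_succ {i : Fin m} {φ : Fin m → k[X]}
    (hφ : φ ∈ polyTuplesFrom k m n' i) (hi : φ i = 0) : φ ∈ polyTuplesFrom k m n' (i + 1) := by
  refine ⟨hφ.1, fun j hj => ?_⟩
  rcases (Nat.lt_succ_iff_lt_or_eq.1 hj) with hj | hj
  · exact hφ.2 j hj
  · rwa [Fin.ext hj]

theorem S1r_eq_map_polyTuplesFrom (r : ℕ) :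
    S1r m n' r = (polyTuplesFrom k m n' r).map (ellSumₗ m n') := by
  refine le_antisymm (Submodule.span_le.2 ?_) (Submodule.map_le_iff_le_comap.2 fun φ hφ => ?_)
  · rintro _ ⟨⟨i, j⟩, hi, rfl⟩
    refine ⟨Pi.single i (Polynomial.X ^ (j : ℕ)), ⟨fun s => ?_, fun s hs => ?_⟩, ?_⟩
    · by_cases hs : s = i
      · subst hs; simp [Polynomial.mem_degreeLT]
      · simp [hs]
    · rw [Pi.single_apply, if_neg (by rintro rfl; exact not_le.2 hs hi)]
    · rw [ellSumₗ_apply, ellSum, Fintype.sum_eq_single i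
        (fun s hs => by simp [hs, ← ellAtₗ_apply]), Pi.single_eq_same, ellAt_X_pow]
  · rw [Submodule.mem_comap, ellSumₗ_apply]
    refine Submodule.sum_mem _ fun i _ => ?_
    by_cases hi : (i : ℕ) < r
    · rw [hφ.2 i hi, ← ellAtₗ_apply, map_zero]; exact zero_mem _
    · exact ellAt_mem_S1r (not_lt.1 hi) _

theorem S1r_succ_le (r : ℕ) : S1r (k := k) m n' (r + 1) ≤ S1r m n' r :=
  Submodule.span_mono fun _ ⟨p, hp, h⟩ => ⟨p, by omega, h⟩

theorem natDegree_lt_of_mem_polyTuplesFrom (hn' : 0 < n') {r : ℕ} {φ : Fin m → k[X]}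
    (hφ : φ ∈ polyTuplesFrom k m n' r) (j : Fin m) : (φ j).natDegree < n' := by
  rcases eq_or_ne (φ j) 0 with h | h
  · simpa [h]
  · exact (Polynomial.natDegree_lt_iff_degree_lt h).2 (Polynomial.mem_degreeLT.1 (hφ.1 j))

end LinearForms

section FrobeniusStep
variable {k' k : Type*} [Field k'] [Fintype k'] [Field k] [Algebra k' k] {m n' : ℕ}
  {F gbar : k[X]}

theorem X_pow_sub_ellAt_mem_QbarFrom (hF : F = Polynomial.X ^ n' - gbar) (hg : gbar.degree < n')
    (q : ℕ) (s : Fin m) (j : Fin n') :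
    X (s, j) ^ q - ellAt m n' s (Polynomial.X ^ ((j : ℕ) + 1) %ₘ F) ∈
      QbarFrom m n' q 0 gbar := by
  have hFm : F.Monic := hF ▸ Polynomial.monic_X_pow_sub hg
  have hFdeg : F.degree = n' := hF ▸ Polynomial.degree_X_pow_sub_of_degree_lt hg
  rcases Nat.lt_or_ge ((j : ℕ) + 1) n' with hj | hj
  · refine Or.inl ⟨s, j, hj, Nat.zero_le _, ?_⟩
    rw [(Polynomial.modByMonic_eq_self_iff hFm).2
        (by rw [hFdeg, Polynomial.degree_X_pow]; exact_mod_cast hj),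
      ellAt_X_pow _ hj]
  · have hjn : (j : ℕ) + 1 = n' := by omega
    refine Or.inr ⟨s, j, Nat.zero_le _, hjn, ?_⟩
    rw [hjn, show (Polynomial.X ^ n' : k[X]) = gbar + F by rw [hF]; ring,
      Polynomial.add_modByMonic, Polynomial.modByMonic_self hFm, add_zero,
      (Polynomial.modByMonic_eq_self_iff hFm).2 (hFdeg ▸ hg)]

theorem ellAt_X_mul_map_modByMonic (σ : k →+* k) (s : Fin m) {h : k[X]} (hh : h.degree < n') :
    ellAt m n' s ((Polynomial.X * h.map σ) %ₘ F) =
      ∑ j : Fin n',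
        C (σ (h.coeff j)) * ellAt m n' s (Polynomial.X ^ ((j : ℕ) + 1) %ₘ F) := by
  rcases eq_or_ne h 0 with rfl | h0
  · simp [← ellAtₗ_apply]
  have hmap : (h.map σ).natDegree < n' :=
    Polynomial.natDegree_map_le.trans_lt ((Polynomial.natDegree_lt_iff_degree_lt h0).2 hh)
  have hsum : Polynomial.X * h.map σ =
      ∑ j : Fin n', σ (h.coeff j) • Polynomial.X ^ ((j : ℕ) + 1) := by
    conv_lhs => rw [Polynomial.as_sum_range' _ _ hmap]
    rw [Finset.mul_sum, ← Fin.sum_univ_eq_sum_range]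
    refine Finset.sum_congr rfl fun j _ => ?_
    rw [Polynomial.coeff_map, ← Polynomial.C_mul_X_pow_eq_monomial, Polynomial.smul_eq_C_mul,
      pow_succ']
    ring
  rw [hsum, ← ellAtₗ_apply, ← Polynomial.modByMonicHom_apply, map_sum, map_sum]
  simp [MvPolynomial.smul_eq_C_mul, ellAtₗ_apply, Polynomial.modByMonicHom_apply]

theorem ellSum_pow_card (φ : Fin m → k[X]) :
    ellSum m n' φ ^ Fintype.card k' =
      ∑ s, ∑ j : Fin n', C ((φ s).coeff j ^ Fintype.card k') * X (s, j) ^ Fintype.card k' := by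
  rw [← FiniteField.frobeniusAlgHom_apply k', ellSum, map_sum]
  refine Finset.sum_congr rfl fun s _ => ?_
  rw [ellAt, map_sum]
  refine Finset.sum_congr rfl fun j _ => ?_
  rw [map_mul, FiniteField.frobeniusAlgHom_apply, FiniteField.frobeniusAlgHom_apply, ← map_pow]

theorem ellSum_X_mul_map_modByMonic_mem_Vspace {σ : k →+* k}
    (hσ : ∀ a, σ a = a ^ Fintype.card k') (hF : F = Polynomial.X ^ n' - gbar)
    (hg : gbar.degree < n') {G : Set (MvPolynomial (Fin m × Fin n') k)}
    (hG : QbarFrom m n' (Fintype.card k') 0 gbar ⊆ G) {φ : Fin m → k[X]}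
    (hφ : ∀ s, (φ s).degree < n') (hv : ellSum m n' φ ∈ Vspace G (Fintype.card k')) :
    ellSum m n' (fun s => (Polynomial.X * (φ s).map σ) %ₘ F) ∈
      Vspace G (Fintype.card k') := by
  set q := Fintype.card k'
  have hq : 1 ≤ q := Fintype.card_pos
  -- reduce `(ellSum φ) ^ q` by the relations `X (s, j) ^ q - ellAt s (X ^ (j + 1) %ₘ F)`
  have key : ellSum m n' (fun s => (Polynomial.X * (φ s).map σ) %ₘ F) = ellSum m n' φ ^ q -
      ∑ s, ∑ j : Fin n', C ((φ s).coeff j ^ q) *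
        (X (s, j) ^ q - ellAt m n' s (Polynomial.X ^ ((j : ℕ) + 1) %ₘ F)) := by
    rw [ellSum_pow_card]
    simp only [mul_sub, Finset.sum_sub_distrib, sub_sub_cancel, ellSum,
      ellAt_X_mul_map_modByMonic σ _ (hφ _), hσ, q]
  rw [key]
  refine sub_mem (pow_mem_Vspace hq hv (totalDegree_ellSum_le φ))
    (Submodule.sum_mem _ fun s _ => Submodule.sum_mem _ fun j _ => ?_)
  rw [← MvPolynomial.smul_eq_C_mul]
  refine Submodule.smul_mem _ _ (mem_Vspace_of_mem (hG (X_pow_sub_ellAt_mem_QbarFrom hF hg q s j))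
    ((totalDegree_sub _ _).trans (max_le ?_ ((totalDegree_ellAt_le s _).trans hq))))
  exact (totalDegree_pow _ _).trans (by simp [totalDegree_X])

variable (k) in
/-- The classes in `k[X]/(F)` of the `i`-th components `g_i` of the elements
`ℓ(∑_{j ≥ i} g_j(x_j))` of `V_{G,q} ∩ S_{1i}`. -/
noncomputable def leadingClasses (m n' q : ℕ) (G : Set (MvPolynomial (Fin m × Fin n') k))
    (F : k[X]) (i : Fin m) : Submodule k (AdjoinRoot F) :=
  (polyTuplesFrom k m n' i ⊓ (Vspace G q).comap (ellSumₗ m n')).map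
    ((AdjoinRoot.mkₐ F).toLinearMap ∘ₗ LinearMap.proj i)

theorem mapsTo_twistedFrobenius_leadingClasses {σ : k →+* k}
    (hσ : ∀ a, σ a = a ^ Fintype.card k') (hF : F = Polynomial.X ^ n' - gbar)
    (hg : gbar.degree < n') (hσF : F ∣ F.map σ) {G : Set (MvPolynomial (Fin m × Fin n') k)}
    (hG : QbarFrom m n' (Fintype.card k') 0 gbar ⊆ G) (i : Fin m) :
    Set.MapsTo (twistedFrobenius F σ hσF) (leadingClasses k m n' (Fintype.card k') G F i)
      (leadingClasses k m n' (Fintype.card k') G F i) := by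
  have hFm : F.Monic := hF ▸ Polynomial.monic_X_pow_sub hg
  have hFdeg : F.degree = n' := hF ▸ Polynomial.degree_X_pow_sub_of_degree_lt hg
  rintro _ ⟨φ, ⟨hφP, hφV⟩, rfl⟩
  rw [SetLike.mem_coe, Submodule.mem_comap, ellSumₗ_apply] at hφV
  refine ⟨fun s => (Polynomial.X * (φ s).map σ) %ₘ F,
    ⟨⟨fun s => Polynomial.mem_degreeLT.2 (hFdeg ▸ Polynomial.degree_modByMonic_lt _ hFm),
      fun s hs => by simp [hφP.2 s hs]⟩, ?_⟩, ?_⟩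
  · rw [SetLike.mem_coe, Submodule.mem_comap, ellSumₗ_apply]
    exact ellSum_X_mul_map_modByMonic_mem_Vspace hσ hF hg hG
      (fun s => Polynomial.mem_degreeLT.1 (hφP.1 s)) hφV
  · simp [twistedFrobenius_mk, AdjoinRoot.mk_eq_mk.2 (Polynomial.dvd_modByMonic_sub _ F)]

end FrobeniusStep

theorem exists_isCoprime_of_Vspace_inf_S1r_lt {k' k : Type*} [Field k'] [Fintype k'] [Field k]
    [Fintype k] [Algebra k' k] {n m n' : ℕ} (hk : Fintype.card k = Fintype.card k' ^ n)
    {f : k'[X]} (hf : Irreducible f) (hfn : f ∣ Polynomial.X ^ n - 1) {gbar : k[X]}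
    (hg : gbar.degree < n') (hF : f.map (algebraMap k' k) = Polynomial.X ^ n' - gbar)
    {G : Set (MvPolynomial (Fin m × Fin n') k)}
    (hG : QbarFrom m n' (Fintype.card k') 0 gbar ⊆ G) {i : Fin m}
    (hlt : Vspace G (Fintype.card k') ⊓ S1r m n' (i + 1) <
      Vspace G (Fintype.card k') ⊓ S1r m n' i) :
    ∃ φ ∈ polyTuplesFrom k m n' i, ellSum m n' φ ∈ Vspace G (Fintype.card k') ∧
      IsCoprime (φ i) (f.map (algebraMap k' k)) := by
  set q := Fintype.card k'
  set F := f.map (algebraMap k' k)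
  set σ : k →+* k := (FiniteField.frobeniusAlgHom k' k : k →+* k)
  have hσ : ∀ a, σ a = a ^ q := FiniteField.frobeniusAlgHom_apply k' k
  have hσn : ∀ c, σ^[n] c = c := fun c => by
    rw [show ⇑σ = (· ^ q) from funext hσ, pow_iterate, ← hk]
    exact FiniteField.pow_card c
  have hσF : F ∣ F.map σ := by rw [Polynomial.map_map, AlgHom.comp_algebraMap]
  have hFn : F ∣ Polynomial.X ^ n - 1 := by simpa using Polynomial.map_dvd (algebraMap k' k) hfn
  obtain ⟨v₀, ⟨hv₀V, hv₀S⟩, hv₀⟩ := SetLike.exists_of_lt hlt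
  rw [S1r_eq_map_polyTuplesFrom] at hv₀S
  obtain ⟨φ₀, hφ₀, rfl⟩ := hv₀S
  have hφ₀i : φ₀ i ≠ 0 := fun h => hv₀ ⟨hv₀V,
    S1r_eq_map_polyTuplesFrom (k := k) (i + 1) ▸
      Submodule.mem_map_of_mem (mem_polyTuplesFrom_succ hφ₀ h)⟩
  have hx : AdjoinRoot.mk F (φ₀ i) ≠ 0 :=
    AdjoinRoot.mk_ne_zero_of_degree_lt (hF ▸ Polynomial.monic_X_pow_sub hg) hφ₀i
      (hF ▸ Polynomial.degree_X_pow_sub_of_degree_lt hg ▸ Polynomial.mem_degreeLT.1 (hφ₀.1 i))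
  obtain ⟨_, ⟨φ, ⟨hφP, hφV⟩, rfl⟩, hy0, hyfix⟩ := exists_ne_zero_fixed_of_semilinear
    Fintype.one_lt_card hk (twistedFrobenius F σ hσF)
    (fun c x => by rw [twistedFrobenius_smul, hσ]) (twistedFrobenius_iterate_eq_self hσn hFn)
    (mapsTo_twistedFrobenius_leadingClasses hσ hF hg hσF hG i)
    ⟨φ₀, ⟨hφ₀, hv₀V⟩, rfl⟩ hx
  rw [SetLike.mem_coe, Submodule.mem_comap, ellSumₗ_apply] at hφV
  refine ⟨φ, hφP, hφV, isCoprime_of_dvd_X_mul_map_sub hσ hf (fun h => hy0 ?_) ?_⟩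
  · simpa using AdjoinRoot.mk_eq_zero.2 h
  · rw [← AdjoinRoot.mk_eq_mk, ← twistedFrobenius_mk]
    simpa using hyfix

theorem reducible_of_irreducible_charpoly_general
    {k' k : Type} [Field k'] [Fintype k'] [Field k] [Algebra k' k]
    (q n m : ℕ) (hq : q = Fintype.card k')
    (α : Module.Basis (Fin n) k' k)
    (fW : Polynomial k') (hmonic : fW.Monic) (hdvd : fW ∣ Polynomial.X ^ n - 1)
    (n' : ℕ) (hn' : n' = fW.natDegree) (hn'pos : 0 < n')
    (gW : Polynomial k') (hgW : gW = Polynomial.X ^ n' - fW)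
    (Fbar Gbar : Set (MvPolynomial (Fin m × Fin n') k))
    (hGbar : Gbar = Fbar ∪ QbarFrom m n' q 0 (gW.map (algebraMap k' k)))
    (hirr : Irreducible fW) :
    ReducibleFor q m n' fW Gbar := by
  subst hq hgW
  let : Fintype k := Module.fintypeOfFintype α
  have hk : Fintype.card k = Fintype.card k' ^ n := by rw [Module.card_fintype α, Fintype.card_fin]
  have hg : ((Polynomial.X ^ n' - fW).map (algebraMap k' k)).degree < (n' : WithBot ℕ) :=
    Polynomial.degree_map_le.trans_lt (hn' ▸ hmonic.degree_X_pow_natDegree_sub_lt)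
  intro i _
  by_cases heq : Vspace Gbar (Fintype.card k') ⊓ S1r m n' i =
    Vspace Gbar (Fintype.card k') ⊓ S1r m n' (i + 1)
  · exact Or.inl heq
  obtain ⟨φ, hφ, hφV, hcop⟩ := exists_isCoprime_of_Vspace_inf_S1r_lt hk hirr hdvd hg
    (by simp) (hGbar ▸ Set.subset_union_right)
    (lt_of_le_of_ne (inf_le_inf_left _ (S1r_succ_le _)) (Ne.symm heq))
  refine Or.inr ⟨φ, natDegree_lt_of_mem_polyTuplesFrom hn'pos hφ, hφ.2, ⟨hφV, ?_⟩, hcop⟩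
  rw [S1r_eq_map_polyTuplesFrom, ← ellSumₗ_apply]
  exact Submodule.mem_map_of_mem hφ

/-- **Lemma 2.4.** If `f_W` is irreducible over `k'`, then `F` is reducible for `W`. -/
theorem reducible_of_irreducible_charpoly
    {k' k : Type} [Field k'] [Fintype k'] [Field k] [Algebra k' k]
    (q n m : ℕ) (hq : q = Fintype.card k') (hn : 0 < n)
    (α : Module.Basis (Fin n) k' k)
    (fW : Polynomial k') (hmonic : fW.Monic) (hdvd : fW ∣ Polynomial.X ^ n - 1)
    (n' : ℕ) (hn' : n' = fW.natDegree) (hn'pos : 0 < n')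
    (gW : Polynomial k') (hgW : gW = Polynomial.X ^ n' - fW)
    (H : Finset (Fin m → Polynomial k))
    (hHdeg : ∀ h ∈ H, ∀ i, (h i).natDegree < n')
    (Fbar Gbar : Set (MvPolynomial (Fin m × Fin n') k))
    (hFbar : Fbar = (fun h => ellSum m n' h) '' ↑H)
    (hGbar : Gbar = Fbar ∪ QbarFrom m n' q 0 (gW.map (algebraMap k' k)))
    (hirr : Irreducible fW) :
    ReducibleFor q m n' fW Gbar :=
  reducible_of_irreducible_charpoly_general q n m hq α fW hmonic hdvd n' hn' hn'pos gW hgW Fbar Gbar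
    hGbar hirr
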